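/- Let J = (V, D, H) be a safe justification, v an unjustified node, and dj a direct justification that wins v for H(v) under H with jl(dj) ≥ jl(v). Then in J' = J[v : dj, H(v)], every cycle that contains an edge of dj passes through v, every node n on such a cycle satisfies Pr(n) ≤ Pr(v), and hence the winner of every such cycle (the parity of the highest priority on it) is H(v). -/

import Mathlib

attribute [local instance] Classical.propDecidable

noncomputable section

open Fin.NatCast

/-- A parity game: an edge relation `E`, an owner function, a priority
function; every node has at least one outgoing edge. -/
structure ParityGame (V : Type*) where
  E : V → V → Prop
  owner : V → Fin 2
  pr : V → ℕ
  exists_succ : ∀ v, ∃ w, E v w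

namespace ParityGame

variable {V : Type*}

/-- An infinite sequence of nodes following the relation `R`. -/
def IsInfPath (R : V → V → Prop) (π : ℕ → V) : Prop :=
  ∀ i, R (π i) (π (i + 1))

/-- `ρ 0, …, ρ n` is a finite sequence of nodes following `R`. -/
def IsFinPath (R : V → V → Prop) (ρ : ℕ → V) (n : ℕ) : Prop :=
  ∀ i < n, R (ρ i) (ρ (i + 1))

/-- A cycle following `R`: a nonempty finite path ending in its starting node. -/
def IsCycle (R : V → V → Prop) (ρ : ℕ → V) (n : ℕ) : Prop :=
  0 < n ∧ IsFinPath R ρ n ∧ ρ n = ρ 0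

/-- `w` is reachable from `v` following `R` (in zero or more steps). -/
def Reaches (R : V → V → Prop) (v w : V) : Prop :=
  Relation.ReflTransGen R v w

/-- The infinite play `π` is won by player `α`: the highest priority
occurring infinitely often in the play has parity `α`. -/
def InfWonBy (G : ParityGame V) (π : ℕ → V) (α : Fin 2) : Prop :=
  ∃ p : ℕ, {i | G.pr (π i) = p}.Infinite ∧
    (∀ q : ℕ, {i | G.pr (π i) = q}.Infinite → q ≤ p) ∧ (p : Fin 2) = α

/-- A play is consistent with a (partial, memoryless) strategy given as a set
of edges: whenever the play is at a node where the strategy selects an edge,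
the play follows that edge. -/
def Consistent (σ : V → V → Prop) (π : ℕ → V) : Prop :=
  ∀ i u, σ (π i) u → π (i + 1) = u

/-- Consistency of a finite play `ρ 0, …, ρ n` with a strategy. -/
def ConsistentFin (σ : V → V → Prop) (ρ : ℕ → V) (n : ℕ) : Prop :=
  ∀ i < n, ∀ u, σ (ρ i) u → ρ (i + 1) = u

/-- The default hypothesis: each node is won by the parity of its priority. -/
def Hd (G : ParityGame V) (v : V) : Fin 2 := (G.pr v : Fin 2)

/-- `dj` is a direct justification for player `α` to win node `v`: a set
containing exactly one outgoing edge of `v` if `α` owns `v`, and all outgoing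
edges of `v` otherwise. -/
def IsDJ (G : ParityGame V) (v : V) (α : Fin 2) (dj : Set (V × V)) : Prop :=
  (G.owner v = α → ∃ w, G.E v w ∧ dj = {(v, w)}) ∧
  (G.owner v ≠ α → dj = {p | p.1 = v ∧ G.E v p.2})

/-- `dj` wins `v` for `α` under hypothesis `H`. -/
def WinsDJ (G : ParityGame V) (H : V → Fin 2) (v : V) (α : Fin 2)
    (dj : Set (V × V)) : Prop :=
  G.IsDJ v α dj ∧ ∀ p ∈ dj, H p.2 = α

/-- The parity game obtained from `G` and the parameter function `P` by
replacing, in every parameter `v`, the outgoing edges of `v` by the self-loop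
`(v, v)` and the priority of `v` by its assigned winner `P v`. -/
def paramGame (G : ParityGame V) (P : V → Option (Fin 2)) : ParityGame V where
  E := fun v w => if P v = none then G.E v w else w = v
  owner := G.owner
  pr := fun v => (P v).elim (G.pr v) Fin.val
  exists_succ := fun v => by
    by_cases h : P v = none
    · obtain ⟨w, hw⟩ := G.exists_succ v
      exact ⟨w, by simp [h, hw]⟩
    · exact ⟨v, by simp [h]⟩

/-- A justification for `G`: a subgraph `D` together with a hypothesis `H`. -/
structure Justification (G : ParityGame V) where
  D : V → V → Prop
  H : V → Fin 2

variable {G : ParityGame V}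

namespace Justification

/-- `v` is justified in `J`: it has an outgoing edge in `D`. -/
def Justified (J : Justification G) (v : V) : Prop := ∃ w, J.D v w

/-- The set of outgoing edges of `v` in `D`. -/
def outEdges (J : Justification G) (v : V) : Set (V × V) :=
  {p | p.1 = v ∧ J.D v p.2}

/-- `J` is weakly winning: the outgoing edges of every justified node `v`
form a direct justification winning `v` for `H v` under `H`. -/
def WeaklyWinning (J : Justification G) : Prop :=
  ∀ v, J.Justified v → G.WinsDJ J.H v (J.H v) (J.outEdges v)

/-- `J` is winning: weakly winning, and every infinite path in `D` is a play
of `G` won by the hypothetical winner of its nodes. -/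
def Winning (J : Justification G) : Prop :=
  J.WeaklyWinning ∧
    ∀ π : ℕ → V, IsInfPath J.D π → G.InfWonBy π (J.H (π 0))

/-- The parameter function `P_J`: the restriction of `H` to the unjustified
nodes of `J`. -/
def param (J : Justification G) (v : V) : Option (Fin 2) :=
  if J.Justified v then none else some (J.H v)

/-- The strategy `σ_{J,α}`: the set of edges `(v, w) ∈ D` with
`O v = H v = α`. -/
def strat (J : Justification G) (α : Fin 2) : V → V → Prop :=
  fun v w => J.D v w ∧ G.owner v = α ∧ J.H v = α

/-- `Par_J v`: the parameters (unjustified nodes) reachable from `v` in `D`. -/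
def Par (J : Justification G) (v : V) : Set V :=
  {w | Reaches J.D v w ∧ ¬ J.Justified w}

/-- The justification level of `v`: the minimal priority of a parameter
reachable from `v`, and `⊤` (`+∞`) if there is none. -/
def jl (J : Justification G) (v : V) : ℕ∞ :=
  sInf ((fun w => (G.pr w : ℕ∞)) '' J.Par v)

/-- The justification level of a direct justification: the minimum of the
justification levels of the targets of its edges. -/
def jlDJ (J : Justification G) (dj : Set (V × V)) : ℕ∞ :=
  sInf ((fun p : V × V => J.jl p.2) '' dj)

/-- `J` is safe: winning, unjustified nodes have their default winner as
hypothesis, and the justification level of every node is at least its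
priority. -/
def Safe (J : Justification G) : Prop :=
  J.Winning ∧ (∀ v, ¬ J.Justified v → J.H v = G.Hd v) ∧
    ∀ v, (G.pr v : ℕ∞) ≤ J.jl v

/-- `J[v : dj, α]`: replace the outgoing `D`-edges of `v` by `dj` and set
`H v := α`. -/
def update (J : Justification G) (v : V) (dj : Set (V × V)) (α : Fin 2) :
    Justification G where
  D := fun x y => if x = v then (x, y) ∈ dj else J.D x y
  H := fun x => if x = v then α else J.H x

/-- `J[v : ∅, Hf v | v ∈ S]`: remove the direct justification of every
`v ∈ S` and set `H v := Hf v`. -/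
def resetAll (J : Justification G) (S : Set V) (Hf : V → Fin 2) :
    Justification G where
  D := fun x y => if x ∈ S then False else J.D x y
  H := fun x => if x ∈ S then Hf x else J.H x

/-- `s_i(J)`: the number of justified nodes of justification level `i`. -/
def size (J : Justification G) (i : ℕ∞) : ℕ :=
  {v | J.Justified v ∧ J.jl v = i}.ncard

end Justification

/-- The preconditions of the operation `Justify(J, v, dj)`. -/
def Executable (G : ParityGame V) (J : Justification G) (v : V)
    (dj : Set (V × V)) : Prop :=
  J.Safe ∧ (∃ α, G.WinsDJ J.H v α dj) ∧
    (if J.Justified v then J.jl v < J.jlDJ dj else J.jl v ≤ J.jlDJ dj)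

/-- The operation `Justify(J, v, dj)`, where `α` is the player winning `v`
by `dj`: if `H v = α` this is `J[v : dj, α]`; otherwise all nodes reaching
`v` in `D` are reset to their default winner and then `v` gets `dj`. -/
def justify (G : ParityGame V) (J : Justification G) (v : V)
    (dj : Set (V × V)) (α : Fin 2) : Justification G :=
  if J.H v = α then J.update v dj α
  else (J.resetAll {w | Reaches J.D w v} G.Hd).update v dj α

/-- The empty justification `(V, ∅, H_d)`. -/
def Justification.empty (G : ParityGame V) : Justification G :=
  ⟨fun _ _ => False, G.Hd⟩

/-! Every edge of `dj` leaves `v`, so a cycle using one passes through `v`, and each of its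
nodes reaches `v` in `J'`. Cut at its first visit to `v`, that path uses only edges of `J`, so
the unjustified node `v` lies in `Par_J(n)` and safety gives `Pr(n) ≤ jl(n) ≤ Pr(v)`. The
highest priority on the cycle is therefore `Pr(v)`, whose parity is `H_d(v) = H(v)`. -/

theorem IsFinPath.reaches {R : V → V → Prop} {ρ : ℕ → V} {n i j : ℕ}
    (hρ : IsFinPath R ρ n) (hij : i ≤ j) (hjn : j ≤ n) : Reaches R (ρ i) (ρ j) := by
  induction j, hij using Nat.le_induction with
  | base => exact .refl
  | succ j _ ih => exact (ih (by omega)).tail (hρ j (by omega))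

theorem IsCycle.reaches {R : V → V → Prop} {ρ : ℕ → V} {n i j : ℕ}
    (hρ : IsCycle R ρ n) (hin : i ≤ n) (hjn : j ≤ n) : Reaches R (ρ i) (ρ j) := by
  obtain ⟨-, hpath, hclosed⟩ := hρ
  rcases le_total i j with hij | hji
  · exact hpath.reaches hij hjn
  · have hround : Reaches R (ρ i) (ρ 0) := hclosed ▸ hpath.reaches hin le_rfl
    exact hround.trans (hpath.reaches (Nat.zero_le j) hjn)

theorem reaches_of_agree_off {R R' : V → V → Prop} {u v : V}
    (hagree : ∀ x y, x ≠ v → R' x y → R x y) (h : Reaches R' u v) : Reaches R u v := by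
  induction h using Relation.ReflTransGen.head_induction_on with
  | refl => exact .refl
  | @head x _ hxy _ ih =>
    by_cases hx : x = v
    · exact hx ▸ .refl
    · exact ih.head (hagree _ _ hx hxy)

theorem IsDJ.fst_eq {v : V} {α : Fin 2} {dj : Set (V × V)} (hdj : G.IsDJ v α dj)
    {p : V × V} (hp : p ∈ dj) : p.1 = v := by
  by_cases howner : G.owner v = α
  · obtain ⟨w, -, rfl⟩ := hdj.1 howner
    rw [Set.mem_singleton_iff.mp hp]
  · rw [hdj.2 howner] at hp
    exact hp.1

namespace Justification

theorem update_D_of_ne (J : Justification G) {v x y : V} {dj : Set (V × V)} {α : Fin 2}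
    (hx : x ≠ v) : (J.update v dj α).D x y ↔ J.D x y := by
  simp only [update, if_neg hx]

theorem Safe.pr_le_of_reaches {J : Justification G} (hJ : J.Safe) {u v : V}
    (hv : ¬ J.Justified v) (huv : Reaches J.D u v) : G.pr u ≤ G.pr v := by
  have hjl : J.jl u ≤ G.pr v := sInf_le ⟨v, ⟨huv, hv⟩, rfl⟩
  exact_mod_cast (hJ.2.2 u).trans hjl

end Justification

theorem stmt_10_general {V : Type*} {G : ParityGame V}
    (J : Justification G) (hJ : J.Safe) (v : V) (dj : Set (V × V))
    (hunj : ¬ J.Justified v) (hwin : G.WinsDJ J.H v (J.H v) dj) :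
    ∀ (ρ : ℕ → V) (n : ℕ), IsCycle (J.update v dj (J.H v)).D ρ n →
      (∃ i < n, (ρ i, ρ (i + 1)) ∈ dj) →
      (∃ i < n, ρ i = v) ∧ (∀ i ≤ n, G.pr (ρ i) ≤ G.pr v) ∧
        ((((Finset.range (n + 1)).sup fun i => G.pr (ρ i) : ℕ) : Fin 2)
          = J.H v) := by
  rintro ρ n hcycle ⟨j, hjn, hedge⟩
  have hρj : ρ j = v := hwin.1.fst_eq hedge
  have hpr (i : ℕ) (hin : i ≤ n) : G.pr (ρ i) ≤ G.pr v := by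
    have hreach := hρj ▸ hcycle.reaches hin hjn.le
    exact hJ.pr_le_of_reaches hunj
      (reaches_of_agree_off (fun _ _ hx => (J.update_D_of_ne hx).mp) hreach)
  have hsup : (Finset.range (n + 1)).sup (fun i => G.pr (ρ i)) = G.pr v :=
    le_antisymm (Finset.sup_le fun i hi => hpr i (Finset.mem_range_succ_iff.mp hi))
      (hρj ▸ Finset.le_sup (f := fun i => G.pr (ρ i)) (Finset.mem_range.mpr (by omega)))
  refine ⟨⟨j, hjn, hρj⟩, hpr, ?_⟩
  rw [hsup]
  exact (hJ.2.1 v hunj).symm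

/-- if `J` is safe, `v` is unjustified, and `dj` wins `v` for
`H v` under `H` with `jl(dj) ≥ jl(v)`, then in `J[v : dj, H v]` every cycle
containing an edge of `dj` passes through `v`, all its nodes have priority
`≤ Pr v`, and the winner of the cycle (the parity of the highest priority on
it) is `H v`. -/
theorem stmt_10 {V : Type*} [Fintype V] {G : ParityGame V}
    (J : Justification G) (hJ : J.Safe) (v : V) (dj : Set (V × V))
    (hunj : ¬ J.Justified v) (hwin : G.WinsDJ J.H v (J.H v) dj)
    (hlev : J.jl v ≤ J.jlDJ dj) :
    ∀ (ρ : ℕ → V) (n : ℕ), IsCycle (J.update v dj (J.H v)).D ρ n →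
      (∃ i < n, (ρ i, ρ (i + 1)) ∈ dj) →
      (∃ i < n, ρ i = v) ∧ (∀ i ≤ n, G.pr (ρ i) ≤ G.pr v) ∧
        ((((Finset.range (n + 1)).sup fun i => G.pr (ρ i) : ℕ) : Fin 2)
          = J.H v) :=
  stmt_10_general J hJ v dj hunj hwin

end ParityGame

end
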